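/- arXiv:0901.1742 — 5 statements merged into one kernel-verified Lean document; each statement's English description precedes it below -/
import Mathlib

section
/- Let f : A → B be a homomorphism of commutative rings and J an ideal of B. Then the map γ : A⋈^f J → (f(A)+J)/J sending (a, f(a)+j) to the class of f(a) modulo J is a surjective ring homomorphism with kernel f⁻¹(J) × J = {(a, j) : a ∈ A, f(a) ∈ J, j ∈ J}; hence (A⋈^f J)/(f⁻¹(J) × J) is isomorphic to (f(A)+J)/J, and if f is surjective it is isomorphic to B/J. -/
/-!
Everything follows from one observation: a pair `x` lies in `A ⋈^f J` exactly when
`x.2 - f x.1 ∈ J`. Hence `γ x`, the class of `x.2` modulo `J`, is also the class of `f x.1`;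
`x.2 ∈ J` iff `f x.1 ∈ J`, which gives the kernel; and `(a, f a + j)` is a preimage of the
class of `f a + j`. The inclusion `f(A) + J ⊆ B` induces an injection `(f(A) + J)/J → B/J`,
onto when `f` is, and composing it with the first isomorphism theorem gives the last claim.
-/

/-- The amalgamation `A ⋈^f J = {(a, f a + j) | a ∈ A, j ∈ J}` of `A` with `B`
along the ideal `J` of `B`, with respect to the ring homomorphism `f : A → B`,
as a subring of the product ring `A × B`. -/
def amalgamation {A B : Type*} [CommRing A] [CommRing B] (f : A →+* B) (J : Ideal B) :
    Subring (A × B) where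
  carrier := {x : A × B | ∃ a : A, ∃ j ∈ J, x = (a, f a + j)}
  one_mem' := ⟨1, 0, J.zero_mem, by simp; rfl⟩
  zero_mem' := ⟨0, 0, J.zero_mem, by simp; rfl⟩
  mul_mem' := by
    rintro x y ⟨a, j, hj, rfl⟩ ⟨c, k, hk, rfl⟩
    refine ⟨a * c, f a * k + j * f c + j * k,
      J.add_mem (J.add_mem (J.mul_mem_left _ hk) (J.mul_mem_right _ hj)) (J.mul_mem_right _ hj),
      ?_⟩
    simp only [Prod.mk_mul_mk, map_mul, Prod.mk.injEq]
    exact ⟨trivial, by ring⟩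
  add_mem' := by
    rintro x y ⟨a, j, hj, rfl⟩ ⟨c, k, hk, rfl⟩
    refine ⟨a + c, j + k, J.add_mem hj hk, ?_⟩
    simp only [Prod.mk_add_mk, map_add, Prod.mk.injEq]
    exact ⟨trivial, by ring⟩
  neg_mem' := by
    rintro x ⟨a, j, hj, rfl⟩
    refine ⟨-a, -j, J.neg_mem hj, ?_⟩
    simp only [Prod.neg_mk, map_neg, Prod.mk.injEq]
    exact ⟨trivial, by ring⟩

/-- The subring `f(A) + J = {f a + j | a ∈ A, j ∈ J}` of `B`. -/
def imageAddIdeal {A B : Type*} [CommRing A] [CommRing B] (f : A →+* B) (J : Ideal B) :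
    Subring B where
  carrier := {b : B | ∃ a : A, ∃ j ∈ J, b = f a + j}
  one_mem' := ⟨1, 0, J.zero_mem, by simp⟩
  zero_mem' := ⟨0, 0, J.zero_mem, by simp⟩
  mul_mem' := by
    rintro x y ⟨a, j, hj, rfl⟩ ⟨c, k, hk, rfl⟩
    exact ⟨a * c, f a * k + j * f c + j * k,
      J.add_mem (J.add_mem (J.mul_mem_left _ hk) (J.mul_mem_right _ hj)) (J.mul_mem_right _ hj),
      by rw [map_mul]; ring⟩
  add_mem' := by
    rintro x y ⟨a, j, hj, rfl⟩ ⟨c, k, hk, rfl⟩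
    exact ⟨a + c, j + k, J.add_mem hj hk, by rw [map_add]; ring⟩
  neg_mem' := by
    rintro x ⟨a, j, hj, rfl⟩
    exact ⟨-a, -j, J.neg_mem hj, by rw [map_neg]; ring⟩

/-- `J` regarded as an ideal of the subring `f(A) + J` of `B`. -/
def idealInImage {A B : Type*} [CommRing A] [CommRing B] (f : A →+* B) (J : Ideal B) :
    Ideal ↥(imageAddIdeal f J) where
  carrier := {x : ↥(imageAddIdeal f J) | (x : B) ∈ J}
  zero_mem' := J.zero_mem
  add_mem' := fun hx hy => J.add_mem hx hy
  smul_mem' := fun c x hx => by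
    show ((c * x : ↥(imageAddIdeal f J)) : B) ∈ J
    exact J.mul_mem_left (c : B) hx

/-- The second projection of the amalgamation, corestricted to `f(A) + J`. -/
def amalgProjB' {A B : Type*} [CommRing A] [CommRing B] (f : A →+* B) (J : Ideal B) :
    ↥(amalgamation f J) →+* ↥(imageAddIdeal f J) :=
  RingHom.codRestrict ((RingHom.snd A B).comp (amalgamation f J).subtype) (imageAddIdeal f J)
    (fun x => by
      obtain ⟨a, j, hj, h⟩ := x.2
      exact ⟨a, j, hj, by show (x : A × B).2 = f a + j; rw [h]⟩)

/-- The natural homomorphism `γ : A ⋈^f J → (f(A)+J)/J`, `(a, f a + j) ↦ f a + J`. -/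
def amalgGamma {A B : Type*} [CommRing A] [CommRing B] (f : A →+* B) (J : Ideal B) :
    ↥(amalgamation f J) →+* ↥(imageAddIdeal f J) ⧸ idealInImage f J :=
  (Ideal.Quotient.mk (idealInImage f J)).comp (amalgProjB' f J)

section Amalgamation

variable {A B : Type*} [CommRing A] [CommRing B] {f : A →+* B} {J : Ideal B}

theorem mem_amalgamation_iff {x : A × B} : x ∈ amalgamation f J ↔ x.2 - f x.1 ∈ J := by
  constructor
  · rintro ⟨a, j, hj, rfl⟩
    simpa using hj
  · intro hx
    exact ⟨x.1, x.2 - f x.1, hx, by simp⟩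

theorem idealInImage_eq_comap : idealInImage f J = J.comap (imageAddIdeal f J).subtype := rfl

theorem amalgGamma_apply (x : amalgamation f J) :
    amalgGamma f J x =
      Ideal.Quotient.mk (idealInImage f J)
        ⟨f (x : A × B).1, (x : A × B).1, 0, J.zero_mem, by simp⟩ :=
  Ideal.Quotient.eq.mpr (mem_amalgamation_iff.mp x.2)

theorem mem_ker_amalgGamma (x : amalgamation f J) :
    x ∈ RingHom.ker (amalgGamma f J) ↔ f (x : A × B).1 ∈ J ∧ (x : A × B).2 ∈ J := by
  have hsnd : x ∈ RingHom.ker (amalgGamma f J) ↔ (x : A × B).2 ∈ J :=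
    RingHom.mem_ker.trans Ideal.Quotient.eq_zero_iff_mem
  have hdiff : (x : A × B).2 - f (x : A × B).1 ∈ J := mem_amalgamation_iff.mp x.2
  have hfst : f (x : A × B).1 ∈ J ↔ (x : A × B).2 ∈ J := by
    rw [← J.add_mem_iff_right hdiff, sub_add_cancel]
  rw [hsnd, hfst, and_self]

theorem amalgGamma_surjective : Function.Surjective (amalgGamma f J) := by
  intro y
  obtain ⟨⟨b, a, j, hj, hb⟩, rfl⟩ := Ideal.Quotient.mk_surjective y
  exact ⟨⟨(a, b), mem_amalgamation_iff.mpr (by simpa [hb] using hj)⟩, rfl⟩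

variable (f J) in
def imageAddIdealQuotientMap : imageAddIdeal f J ⧸ idealInImage f J →+* B ⧸ J :=
  Ideal.quotientMap J (imageAddIdeal f J).subtype idealInImage_eq_comap.le

theorem imageAddIdealQuotientMap_injective : Function.Injective (imageAddIdealQuotientMap f J) :=
  Ideal.quotientMap_injective' idealInImage_eq_comap.ge

theorem imageAddIdealQuotientMap_surjective (hf : Function.Surjective f) :
    Function.Surjective (imageAddIdealQuotientMap f J) := by
  intro y
  obtain ⟨b, rfl⟩ := Ideal.Quotient.mk_surjective y
  obtain ⟨a, rfl⟩ := hf b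
  exact ⟨Ideal.Quotient.mk _ ⟨f a, a, 0, J.zero_mem, by simp⟩, Ideal.quotientMap_mk⟩

end Amalgamation

theorem statement3 {A B : Type*} [CommRing A] [CommRing B] (f : A →+* B) (J : Ideal B) :
    (∀ x : amalgamation f J,
      amalgGamma f J x =
        Ideal.Quotient.mk (idealInImage f J)
          ⟨f (x : A × B).1, (x : A × B).1, 0, J.zero_mem, by simp⟩) ∧
    Function.Surjective (amalgGamma f J) ∧
    (∀ x : amalgamation f J,
      x ∈ RingHom.ker (amalgGamma f J) ↔ f (x : A × B).1 ∈ J ∧ (x : A × B).2 ∈ J) ∧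
    Nonempty ((↥(amalgamation f J) ⧸ RingHom.ker (amalgGamma f J)) ≃+*
      (↥(imageAddIdeal f J) ⧸ idealInImage f J)) ∧
    (Function.Surjective f →
      Nonempty ((↥(amalgamation f J) ⧸ RingHom.ker (amalgGamma f J)) ≃+* (B ⧸ J))) := by
  let firstIso := RingHom.quotientKerEquivOfSurjective (amalgGamma_surjective (f := f) (J := J))
  refine ⟨amalgGamma_apply, amalgGamma_surjective, mem_ker_amalgGamma, ⟨firstIso⟩, fun hf => ?_⟩
  exact ⟨firstIso.trans <| RingEquiv.ofBijective _
    ⟨imageAddIdealQuotientMap_injective, imageAddIdealQuotientMap_surjective hf⟩⟩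
end

section
/- Let f : A → B be a homomorphism of commutative rings and J a nonzero ideal of B. Then A⋈^f J is an integral domain if and only if the subring f(A)+J of B is an integral domain and f⁻¹(J) = {0}. In particular, if B is an integral domain and f⁻¹(J) = {0}, then A⋈^f J is an integral domain. -/
/-! The second projection `(a, f a + j) ↦ f a + j` maps `A ⋈^f J` onto `f(A) + J`, and its kernel
consists of the pairs `(a, 0)` with `f a ∈ J`; so it is an isomorphism exactly when
`f⁻¹(J) = 0`. Conversely, if `a ∈ f⁻¹(J)` and `0 ≠ j ∈ J`, then `(a, 0) · (0, j) = 0` in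
`A ⋈^f J`, so a domain forces `a = 0`. -/

namespace amalgamation

variable {A B : Type*} [CommRing A] [CommRing B] (f : A →+* B) (J : Ideal B)

def sndHom : amalgamation f J →+* imageAddIdeal f J :=
  RingHom.codRestrict ((RingHom.snd A B).comp (amalgamation f J).subtype) _ <| by
    rintro ⟨x, a, j, hj, rfl⟩
    exact ⟨a, j, hj, rfl⟩

theorem sndHom_surjective : Function.Surjective (sndHom f J) := by
  rintro ⟨b, a, j, hj, rfl⟩
  exact ⟨⟨(a, f a + j), a, j, hj, rfl⟩, rfl⟩

theorem sndHom_injective (h : Ideal.comap f J = ⊥) : Function.Injective (sndHom f J) := by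
  rw [injective_iff_map_eq_zero]
  rintro ⟨x, a, j, hj, rfl⟩ hx
  have hsum : f a + j = 0 := congrArg Subtype.val hx
  have ha : a ∈ Ideal.comap f J := by
    rw [Ideal.mem_comap, eq_neg_of_add_eq_zero_left hsum]
    exact J.neg_mem hj
  obtain rfl : a = 0 := by rwa [h, Ideal.mem_bot] at ha
  obtain rfl : j = 0 := by simpa using hsum
  ext <;> simp

noncomputable def equivImageAddIdeal (h : Ideal.comap f J = ⊥) :
    amalgamation f J ≃+* imageAddIdeal f J :=
  RingEquiv.ofBijective (sndHom f J) ⟨sndHom_injective f J h, sndHom_surjective f J⟩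

theorem isDomain_iff_of_comap_eq_bot (h : Ideal.comap f J = ⊥) :
    IsDomain (amalgamation f J) ↔ IsDomain (imageAddIdeal f J) :=
  (equivImageAddIdeal f J h).toMulEquiv.isDomain_iff

theorem comap_eq_bot_of_isDomain [IsDomain (amalgamation f J)] (hJ : J ≠ ⊥) :
    Ideal.comap f J = ⊥ := by
  obtain ⟨j, hjJ, hj⟩ := Submodule.exists_mem_ne_zero_of_ne_bot hJ
  refine (Submodule.eq_bot_iff _).mpr fun a ha => ?_
  let x : amalgamation f J := ⟨(a, 0), a, -f a, J.neg_mem ha, by simp⟩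
  let y : amalgamation f J := ⟨(0, j), 0, j, hjJ, by simp⟩
  have hxy : x * y = 0 := by ext <;> simp [x, y]
  rcases mul_eq_zero.mp hxy with hx | hy
  · exact congrArg (fun z : amalgamation f J => z.1.1) hx
  · exact absurd (congrArg (fun z : amalgamation f J => z.1.2) hy) hj

end amalgamation

theorem statement4 {A B : Type*} [CommRing A] [CommRing B] (f : A →+* B) (J : Ideal B)
    (hJ : J ≠ ⊥) :
    (IsDomain ↥(amalgamation f J) ↔ IsDomain ↥(imageAddIdeal f J) ∧ Ideal.comap f J = ⊥) ∧
    (IsDomain B → Ideal.comap f J = ⊥ → IsDomain ↥(amalgamation f J)) := by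
  have key : IsDomain (amalgamation f J) ↔ IsDomain (imageAddIdeal f J) ∧ Ideal.comap f J = ⊥ := by
    constructor
    · intro _
      have h := amalgamation.comap_eq_bot_of_isDomain f J hJ
      exact ⟨(amalgamation.isDomain_iff_of_comap_eq_bot f J h).mp ‹_›, h⟩
    · rintro ⟨hdom, h⟩
      exact (amalgamation.isDomain_iff_of_comap_eq_bot f J h).mpr hdom
  exact ⟨key, fun _ h => key.mpr ⟨inferInstance, h⟩⟩
end

section
/- Let f : A → B be a homomorphism of commutative rings and J an ideal of B. Then the ring A⋈^f J is reduced if and only if A is reduced and Nilp(B) ∩ J = {0}, where Nilp(B) is the set of nilpotent elements of B. In particular, if A and B are both reduced then A⋈^f J is reduced. -/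
theorem Prod.isNilpotent_iff {R S : Type*} [MonoidWithZero R] [MonoidWithZero S] {x : R × S} :
    IsNilpotent x ↔ IsNilpotent x.1 ∧ IsNilpotent x.2 := by
  constructor
  · rintro ⟨n, hn⟩
    exact ⟨⟨n, by rw [← Prod.pow_fst, hn, Prod.fst_zero]⟩,
      ⟨n, by rw [← Prod.pow_snd, hn, Prod.snd_zero]⟩⟩
  · rintro ⟨⟨n, hn⟩, ⟨m, hm⟩⟩
    refine ⟨n + m, Prod.ext ?_ ?_⟩
    · rw [Prod.pow_fst, pow_add, hn, zero_mul, Prod.fst_zero]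
    · rw [Prod.pow_snd, pow_add, hm, mul_zero, Prod.snd_zero]

theorem Subring.isReduced_iff {R : Type*} [Ring R] (S : Subring R) :
    IsReduced S ↔ ∀ x ∈ S, IsNilpotent x → x = 0 := by
  rw [_root_.isReduced_iff, Subtype.forall]
  refine forall₂_congr fun x hx => ?_
  rw [← IsNilpotent.map_iff (f := S.subtype) Subtype.val_injective, ← Subtype.val_inj]
  rfl

namespace amalgamation

variable {A B : Type*} [CommRing A] [CommRing B] (f : A →+* B) (J : Ideal B)

theorem mem_iff {x : A × B} : x ∈ amalgamation f J ↔ x.2 - f x.1 ∈ J := by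
  constructor
  · rintro ⟨a, j, hj, rfl⟩
    simpa using hj
  · intro hx
    exact ⟨x.1, x.2 - f x.1, hx, by simp⟩

theorem isReduced_iff : IsReduced (amalgamation f J) ↔ IsReduced A ∧ nilradical B ⊓ J = ⊥ := by
  rw [Subring.isReduced_iff]
  constructor
  · intro h
    refine ⟨⟨fun a ha => ?_⟩, eq_bot_iff.2 fun b ⟨hb, hbJ⟩ => ?_⟩
    · have hmem : (a, f a) ∈ amalgamation f J := by simp [mem_iff]
      exact congrArg Prod.fst (h _ hmem (Prod.isNilpotent_iff.2 ⟨ha, ha.map f⟩))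
    · have hmem : (0, b) ∈ amalgamation f J := by simpa [mem_iff] using hbJ
      exact congrArg Prod.snd (h _ hmem (Prod.isNilpotent_iff.2 ⟨.zero, hb⟩))
  · rintro ⟨hA, hJ⟩ ⟨a, b⟩ hx hnil
    obtain ⟨ha, hb⟩ := Prod.isNilpotent_iff.1 hnil
    obtain rfl : a = 0 := hA.eq_zero a ha
    have hb' : b ∈ nilradical B ⊓ J := ⟨hb, by simpa [mem_iff] using hx⟩
    rw [hJ, Ideal.mem_bot] at hb'
    rw [hb', Prod.mk_zero_zero]

end amalgamation

theorem statement5 {A B : Type*} [CommRing A] [CommRing B] (f : A →+* B) (J : Ideal B) :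
    (IsReduced ↥(amalgamation f J) ↔ IsReduced A ∧ nilradical B ⊓ J = ⊥) ∧
    (IsReduced A → IsReduced B → IsReduced ↥(amalgamation f J)) := by
  refine ⟨amalgamation.isReduced_iff f J, fun hA _ => ?_⟩
  exact (amalgamation.isReduced_iff f J).2 ⟨hA, by rw [nilradical_eq_zero, Ideal.zero_eq_bot, bot_inf_eq]⟩
end

section
/- Let f : A → B be a homomorphism of commutative rings and J an ideal of B. Then the ring A⋈^f J is Noetherian if and only if both A and the subring f(A)+J of B are Noetherian rings. -/
theorem IsModularLattice.wellFoundedGT_of_inf_eq_bot {α : Type*} [Lattice α] [OrderBot α]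
    [IsModularLattice α] {a b : α} (hab : a ⊓ b = ⊥) [WellFoundedGT (Set.Ici a)]
    [WellFoundedGT (Set.Ici b)] : WellFoundedGT α := by
  have inf_recover : ∀ x : α, (x ⊓ a ⊔ b) ⊓ a = x ⊓ a := fun x ↦ by
    rw [sup_inf_assoc_of_le b inf_le_right, inf_comm b, hab, sup_bot_eq]
  refine StrictMono.wellFoundedGT (f := fun x : α ↦
    ((⟨x ⊔ a, le_sup_right⟩ : Set.Ici a), (⟨x ⊓ a ⊔ b, le_sup_right⟩ : Set.Ici b))) ?_
  intro x y hxy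
  refine lt_of_le_of_ne ⟨sup_le_sup_right hxy.le a,
    sup_le_sup_right (inf_le_inf_right a hxy.le) b⟩ fun h ↦ hxy.ne ?_
  have hsup : x ⊔ a = y ⊔ a := congrArg (fun p ↦ p.1.1) h
  have hinf : x ⊓ a ⊔ b = y ⊓ a ⊔ b := congrArg (fun p ↦ p.2.1) h
  refine eq_of_le_of_inf_le_of_sup_le hxy.le ?_ hsup.ge
  rw [← inf_recover x, ← inf_recover y, hinf]

theorem isNoetherianRing_of_ker_inf_ker_eq_bot {R S T : Type*} [Ring R] [Ring S] [Ring T]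
    {g : R →+* S} {h : R →+* T} (hg : Function.Surjective g) (hh : Function.Surjective h)
    (hker : RingHom.ker g ⊓ RingHom.ker h = ⊥) [IsNoetherianRing S] [IsNoetherianRing T] :
    IsNoetherianRing R := by
  have : WellFoundedGT (Set.Ici (RingHom.ker g)) :=
    (Ideal.relIsoOfSurjective g hg).symm.strictMono.wellFoundedGT
  have : WellFoundedGT (Set.Ici (RingHom.ker h)) :=
    (Ideal.relIsoOfSurjective h hh).symm.strictMono.wellFoundedGT
  exact isNoetherian_iff'.mpr (IsModularLattice.wellFoundedGT_of_inf_eq_bot hker)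

namespace amalgamation

variable {A B : Type*} [CommRing A] [CommRing B] (f : A →+* B) (J : Ideal B)

def fst : amalgamation f J →+* A :=
  (RingHom.fst A B).comp (amalgamation f J).subtype

def snd : amalgamation f J →+* imageAddIdeal f J :=
  ((RingHom.snd A B).comp (amalgamation f J).subtype).codRestrict _ <| by
    rintro ⟨_, a, j, hj, rfl⟩
    exact ⟨a, j, hj, rfl⟩

theorem fst_surjective : Function.Surjective (fst f J) :=
  fun a ↦ ⟨⟨(a, f a), a, 0, J.zero_mem, by simp⟩, rfl⟩

theorem snd_surjective : Function.Surjective (snd f J) := by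
  rintro ⟨_, a, j, hj, rfl⟩
  exact ⟨⟨(a, f a + j), a, j, hj, rfl⟩, rfl⟩

theorem ker_fst_inf_ker_snd : RingHom.ker (fst f J) ⊓ RingHom.ker (snd f J) = ⊥ := by
  refine eq_bot_iff.mpr fun x ⟨h₁, h₂⟩ ↦ (Submodule.mem_bot _).mpr ?_
  exact Subtype.ext (Prod.ext h₁ (congrArg Subtype.val h₂))

end amalgamation

theorem statement7 {A B : Type*} [CommRing A] [CommRing B] (f : A →+* B) (J : Ideal B) :
    IsNoetherianRing ↥(amalgamation f J) ↔
      IsNoetherianRing A ∧ IsNoetherianRing ↥(imageAddIdeal f J) := by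
  constructor
  · intro _
    exact ⟨isNoetherianRing_of_surjective _ _ _ (amalgamation.fst_surjective f J),
      isNoetherianRing_of_surjective _ _ _ (amalgamation.snd_surjective f J)⟩
  · rintro ⟨_, _⟩
    exact isNoetherianRing_of_ker_inf_ker_eq_bot (amalgamation.fst_surjective f J)
      (amalgamation.snd_surjective f J) (amalgamation.ker_fst_inf_ker_snd f J)
end

section
/- Let α : A → C and β : B → C be homomorphisms of commutative rings, let D := α ×_C β be their pullback, and let p_A : D → A be the restriction of the first projection. Then the following are equivalent: (i) p_A is a ring retraction, i.e., there exists a ring homomorphism ι : A → D with p_A ∘ ι = id_A; (ii) there exist a ring homomorphism f : A → B and an ideal J of B such that D = A⋈^f J. -/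
/-- The pullback (fiber product) `α ×_C β = {(a, b) ∈ A × B | α a = β b}` of two
ring homomorphisms `α : A → C` and `β : B → C`, as a subring of `A × B`. -/
def pullbackSubring {A B C : Type*} [CommRing A] [CommRing B] [CommRing C]
    (α : A →+* C) (β : B →+* C) : Subring (A × B) where
  carrier := {x : A × B | α x.1 = β x.2}
  one_mem' := by simp
  zero_mem' := by simp
  mul_mem' := by
    intro x y hx hy
    simp only [Set.mem_setOf_eq, Prod.fst_mul, Prod.snd_mul, map_mul] at *
    rw [hx, hy]
  add_mem' := by
    intro x y hx hy
    simp only [Set.mem_setOf_eq, Prod.fst_add, Prod.snd_add, map_add] at *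
    rw [hx, hy]
  neg_mem' := by
    intro x hx
    simp only [Set.mem_setOf_eq, Prod.fst_neg, Prod.snd_neg, map_neg] at *
    rw [hx]

/-! Both conditions say that `α` factors through `β`. A lift `f` with `β ∘ f = α` gives the
section `a ↦ (a, f a)` of `p_A`, and conversely the second component of a section is such a lift;
for any lift, `(a, b) ∈ α ×_C β` iff `b - f a ∈ ker β`, so `α ×_C β = A ⋈^f ker β`. -/

section

variable {A B C : Type*} [CommRing A] [CommRing B] [CommRing C]

theorem mem_pullbackSubring {α : A →+* C} {β : B →+* C} {x : A × B} :
    x ∈ pullbackSubring α β ↔ α x.1 = β x.2 :=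
  Iff.rfl

theorem mem_amalgamation {f : A →+* B} {J : Ideal B} {x : A × B} :
    x ∈ amalgamation f J ↔ ∃ a : A, ∃ j ∈ J, x = (a, f a + j) :=
  Iff.rfl

theorem mk_mem_amalgamation (f : A →+* B) (J : Ideal B) (a : A) :
    (a, f a) ∈ amalgamation f J :=
  ⟨a, 0, J.zero_mem, by simp⟩

theorem pullbackSubring_eq_amalgamation_ker {α : A →+* C} {β : B →+* C} {f : A →+* B}
    (hf : β.comp f = α) : pullbackSubring α β = amalgamation f (RingHom.ker β) := by
  have hf' (a : A) : β (f a) = α a := RingHom.congr_fun hf a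
  ext ⟨a, b⟩
  rw [mem_pullbackSubring, mem_amalgamation]
  constructor
  · intro h
    exact ⟨a, b - f a, by rw [RingHom.mem_ker, map_sub, hf', h, sub_self], by simp⟩
  · rintro ⟨a', j, hj, he⟩
    obtain ⟨rfl, rfl⟩ := Prod.mk.inj he
    rw [map_add, hf', RingHom.mem_ker.mp hj, add_zero]

theorem exists_section_fst_iff_exists_lift (α : A →+* C) (β : B →+* C) :
    (∃ ι : A →+* pullbackSubring α β,
        ((RingHom.fst A B).comp (pullbackSubring α β).subtype).comp ι = RingHom.id A) ↔
      ∃ f : A →+* B, β.comp f = α := by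
  constructor
  · rintro ⟨ι, hι⟩
    refine ⟨(RingHom.snd A B).comp ((pullbackSubring α β).subtype.comp ι), ?_⟩
    ext a
    have hfst : (ι a : A × B).1 = a := RingHom.congr_fun hι a
    simpa [hfst] using ((ι a).2 : α (ι a : A × B).1 = β (ι a : A × B).2).symm
  · rintro ⟨f, hf⟩
    have hgraph (a : A) : (a, f a) ∈ pullbackSubring α β := (RingHom.congr_fun hf a).symm
    exact ⟨((RingHom.id A).prod f).codRestrict _ hgraph, rfl⟩

theorem exists_eq_amalgamation_iff_exists_lift (α : A →+* C) (β : B →+* C) :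
    (∃ (f : A →+* B) (J : Ideal B), pullbackSubring α β = amalgamation f J) ↔
      ∃ f : A →+* B, β.comp f = α := by
  constructor
  · rintro ⟨f, J, hD⟩
    refine ⟨f, RingHom.ext fun a => ?_⟩
    have hgraph : (a, f a) ∈ pullbackSubring α β := hD ▸ mk_mem_amalgamation f J a
    exact hgraph.symm
  · rintro ⟨f, hf⟩
    exact ⟨f, _, pullbackSubring_eq_amalgamation_ker hf⟩

end

theorem statement16 {A B C : Type*} [CommRing A] [CommRing B] [CommRing C]
    (α : A →+* C) (β : B →+* C) :
    (∃ ι : A →+* ↥(pullbackSubring α β),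
        ((RingHom.fst A B).comp (pullbackSubring α β).subtype).comp ι = RingHom.id A) ↔
      ∃ (f : A →+* B) (J : Ideal B), pullbackSubring α β = amalgamation f J :=
  (exists_section_fst_iff_exists_lift α β).trans (exists_eq_amalgamation_iff_exists_lift α β).symm
end
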